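/- arXiv:math/9904143 — 6 statements merged into one kernel-verified Lean document; each statement's English description precedes it below -/
import Mathlib

section
/- Let K be a field. The map Φ : Γ → K[[X]] sending f to the power series whose coefficient on the monomial ∏_p x_p^{d_p} (for each finitely supported function d from the primes to ℕ) is f(∏_p p^{d_p}) is an isomorphism of K-algebras from Γ onto the large power series ring K[[X]] in variables x_p indexed by the prime numbers (the ring of all K-valued functions on the free abelian monoid on the variables, i.e. multivariate power series indexed by the primes). -/
/-!
Let `K` be a field.  The map `Φ : Γ → K[[X]]` sending a number-theoretic
function `f` to the power series whose coefficient on the monomial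
`∏_p x_p ^ (d p)` (for `d` a finitely supported function from the primes to
`ℕ`) is `f (∏_p p ^ (d p))` is an isomorphism of `K`-algebras from the ring
`Γ` of number-theoretic functions (implemented as `ArithmeticFunction K` with
the convolution product) onto the large power series ring `K[[X]]` in
variables indexed by the prime numbers (implemented as
`MvPowerSeries Nat.Primes K`).
-/

/-- The ring homomorphism sending `c : K` to the arithmetic function supported at `1`
with value `c`; it makes `ArithmeticFunction K` into a `K`-algebra. -/
noncomputable def numThAlgMap (K : Type*) [Field K] : K →+* ArithmeticFunction K where
  toFun c := ⟨fun n => if n = 1 then c else 0, by simp⟩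
  map_one' := by
    ext n
    simp [ArithmeticFunction.one_apply]
  map_mul' c d := by
    ext n
    show (if n = 1 then c * d else 0) = ∑ x ∈ n.divisorsAntidiagonal,
      (if x.1 = 1 then c else 0) * (if x.2 = 1 then d else 0)
    have h : ∀ x ∈ n.divisorsAntidiagonal,
        (if x.1 = 1 then c else 0) * (if x.2 = 1 then d else 0)
          = if x = ((1, 1) : ℕ × ℕ) then c * d else 0 := by
      intro x _
      rcases x with ⟨a, b⟩
      by_cases h1 : a = 1 <;> by_cases h2 : b = 1 <;> simp [h1, h2, Prod.ext_iff]
    rw [Finset.sum_congr rfl h,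
      Finset.sum_ite_eq' n.divisorsAntidiagonal ((1, 1) : ℕ × ℕ) fun _ => c * d]
    by_cases hn : n = 1
    · subst hn; simp
    · simp [Nat.mem_divisorsAntidiagonal, hn, Ne.symm hn]
  map_zero' := by
    ext n
    simp
  map_add' c d := by
    ext n
    show (if n = 1 then c + d else 0) = (if n = 1 then c else 0) + (if n = 1 then d else 0)
    split <;> simp

noncomputable instance (K : Type*) [Field K] : Algebra K (ArithmeticFunction K) :=
  (numThAlgMap K).toAlgebra

namespace ArithFunMvPS

/-- `N d = ∏ p ^ d p`. -/
def N (d : Nat.Primes →₀ ℕ) : ℕ := d.prod fun p k => (p : ℕ) ^ k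

/-- `D n` is the factorization of `n` as a finsupp on primes. -/
noncomputable def D (n : ℕ) : Nat.Primes →₀ ℕ :=
  Finsupp.subtypeDomain Nat.Prime n.factorization

lemma N_pos (d : Nat.Primes →₀ ℕ) : 0 < N d :=
  Finset.prod_pos fun p _ => pow_pos p.2.pos _

lemma N_ne_zero (d : Nat.Primes →₀ ℕ) : N d ≠ 0 := (N_pos d).ne'

lemma N_zero : N 0 = 1 := by simp [N]

lemma N_add (d₁ d₂ : Nat.Primes →₀ ℕ) : N (d₁ + d₂) = N d₁ * N d₂ := by
  simpa [N] using Finsupp.prod_add_index (h := fun (p : Nat.Primes) k => (p : ℕ) ^ k)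
    (fun p _ => pow_zero _) (fun p _ k₁ k₂ => pow_add _ _ _)

lemma D_apply (n : ℕ) (p : Nat.Primes) : D n p = n.factorization p := rfl

lemma N_D (n : ℕ) (hn : n ≠ 0) : N (D n) = n := by
  have h1 : (Finsupp.subtypeDomain Nat.Prime n.factorization).prod
      (fun (a : {p : ℕ // p.Prime}) b => (a : ℕ) ^ b)
      = n.factorization.prod (fun a b => a ^ b) :=
    Finsupp.prod_subtypeDomain_index (fun p hp =>
      Nat.prime_of_mem_primeFactors (by rwa [Nat.support_factorization] at hp))
  exact h1.trans (Nat.factorization_prod_pow_eq_self hn)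

lemma D_mul (a b : ℕ) (ha : a ≠ 0) (hb : b ≠ 0) : D (a * b) = D a + D b := by
  ext p
  simp [D_apply, Nat.factorization_mul ha hb]

lemma D_N (d : Nat.Primes →₀ ℕ) : D (N d) = d := by
  ext q
  rw [D_apply, N, Finsupp.prod, Nat.factorization_prod
    (fun p _ => pow_ne_zero _ p.2.pos.ne')]
  simp only [Finsupp.finset_sum_apply]
  have key : ∀ p : Nat.Primes, ((p : ℕ) ^ d p).factorization (q : ℕ)
      = if p = q then d p else 0 := by
    intro p
    rw [Nat.Prime.factorization_pow p.2]
    by_cases h : p = q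
    · simp [h]
    · rw [Finsupp.single_apply, if_neg (by simpa [Nat.Primes.coe_nat_inj] using h), if_neg h]
  rw [Finset.sum_congr rfl fun p _ => key p, Finset.sum_ite_eq' _ q]
  split
  · rfl
  · exact (Finsupp.notMem_support_iff.mp (by assumption)).symm

lemma N_eq_one_iff (d : Nat.Primes →₀ ℕ) : N d = 1 ↔ d = 0 := by
  constructor
  · intro h
    have h2 := D_N d
    rw [h] at h2
    rw [← h2]
    ext p; simp [D_apply]
  · rintro rfl; exact N_zero

variable {K : Type*} [Field K]

/-- The forward map. -/
def toPS (f : ArithmeticFunction K) : MvPowerSeries Nat.Primes K := fun d => f (N d)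

lemma coeff_toPS (f : ArithmeticFunction K) (d : Nat.Primes →₀ ℕ) :
    MvPowerSeries.coeff d (toPS f) = f (N d) := rfl

lemma toPS_mul (f g : ArithmeticFunction K) : toPS (f * g) = toPS f * toPS g := by
  classical
  ext d
  rw [coeff_toPS, MvPowerSeries.coeff_mul, ArithmeticFunction.mul_apply]
  refine Finset.sum_nbij' (fun x => (D x.1, D x.2)) (fun y => (N y.1, N y.2)) ?_ ?_ ?_ ?_ ?_
  · rintro ⟨a, b⟩ hx
    rw [Nat.mem_divisorsAntidiagonal] at hx
    have ha : a ≠ 0 := by rintro rfl; exact hx.2 (by simpa using hx.1.symm)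
    have hb : b ≠ 0 := by rintro rfl; exact hx.2 (by simpa using hx.1.symm)
    rw [Finset.HasAntidiagonal.mem_antidiagonal, ← D_mul a b ha hb, hx.1, D_N]
  · rintro ⟨e₁, e₂⟩ hy
    rw [Finset.HasAntidiagonal.mem_antidiagonal] at hy
    rw [Nat.mem_divisorsAntidiagonal, ← N_add, hy]
    exact ⟨rfl, N_ne_zero d⟩
  · rintro ⟨a, b⟩ hx
    rw [Nat.mem_divisorsAntidiagonal] at hx
    have ha : a ≠ 0 := by rintro rfl; exact hx.2 (by simpa using hx.1.symm)
    have hb : b ≠ 0 := by rintro rfl; exact hx.2 (by simpa using hx.1.symm)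
    simp [N_D a ha, N_D b hb]
  · rintro ⟨e₁, e₂⟩ _
    simp [D_N]
  · rintro ⟨a, b⟩ hx
    rw [Nat.mem_divisorsAntidiagonal] at hx
    have ha : a ≠ 0 := by rintro rfl; exact hx.2 (by simpa using hx.1.symm)
    have hb : b ≠ 0 := by rintro rfl; exact hx.2 (by simpa using hx.1.symm)
    show f a * g b = f (N (D a)) * g (N (D b))
    rw [N_D a ha, N_D b hb]

lemma toPS_add (f g : ArithmeticFunction K) : toPS (f + g) = toPS f + toPS g := by
  ext d
  rw [coeff_toPS, map_add, coeff_toPS, coeff_toPS, ArithmeticFunction.add_apply]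

lemma toPS_algebraMap (c : K) :
    toPS (algebraMap K (ArithmeticFunction K) c) = algebraMap K (MvPowerSeries Nat.Primes K) c := by
  classical
  ext d
  rw [coeff_toPS, MvPowerSeries.algebraMap_apply, Algebra.algebraMap_self, RingHom.id_apply,
    MvPowerSeries.coeff_C]
  show (if N d = 1 then c else 0) = _
  simp only [N_eq_one_iff]

/-- The inverse map. -/
noncomputable def ofPS (F : MvPowerSeries Nat.Primes K) : ArithmeticFunction K :=
  ⟨fun n => if n = 0 then 0 else F (D n), by simp⟩

lemma ofPS_toPS (f : ArithmeticFunction K) : ofPS (toPS f) = f := by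
  ext n
  show (if n = 0 then 0 else f (N (D n))) = f n
  rcases eq_or_ne n 0 with rfl | hn
  · simp
  · rw [if_neg hn, N_D n hn]

lemma toPS_ofPS (F : MvPowerSeries Nat.Primes K) : toPS (ofPS F) = F := by
  funext d
  show (if N d = 0 then 0 else F (D (N d))) = F d
  rw [if_neg (N_ne_zero d), D_N d]

end ArithFunMvPS

open ArithFunMvPS in
theorem arithmeticFunction_algEquiv_mvPowerSeries (K : Type*) [Field K] :
    ∃ Φ : ArithmeticFunction K ≃ₐ[K] MvPowerSeries Nat.Primes K,
      ∀ (f : ArithmeticFunction K) (d : Nat.Primes →₀ ℕ),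
        MvPowerSeries.coeff d (Φ f) = f (d.prod fun p k => (p : ℕ) ^ k) := by
  exact ⟨{ toFun := toPS
           invFun := ofPS
           left_inv := ofPS_toPS
           right_inv := toPS_ofPS
           map_mul' := toPS_mul
           map_add' := toPS_add
           commutes' := toPS_algebraMap }, fun f d => rfl⟩
end

section
/- Let n ∈ ℕ+ and r = r(n). The residue classes of the monomials x^a of weight w(x^a) ≤ n form a K-vector space basis of A_n = K[x_1, …, x_r]/I_n. Consequently A_n is an artinian K-algebra with dim_K(A_n) = n. -/
/-!
Let `K` be a field, `n ≥ 1`, and `r = r(n)` the number of primes `≤ n`.  Let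
`I_n ⊆ K[x_1, …, x_r]` be the monomial ideal generated by all monomials of
weight `> n`, where the weight of `x^a = x_1^{a_1}⋯x_r^{a_r}` is
`w(x^a) = p_1^{a_1}⋯p_r^{a_r}` (`p_i` the `i`-th prime).  Then the residue
classes of the monomials of weight `≤ n` form a `K`-vector space basis of
`A_n = K[x_1, …, x_r]/I_n`; consequently `A_n` is an artinian `K`-algebra with
`dim_K A_n = n`.
-/

/-- The weight `p_1^{a_1}⋯p_r^{a_r}` of the exponent vector `a` (0-indexed:
the variable `x_i` corresponds to the `i`-th prime `Nat.nth Nat.Prime i`,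
with `Nat.nth Nat.Prime 0 = 2`). -/
noncomputable def weight {r : ℕ} (d : Fin r →₀ ℕ) : ℕ :=
  ∏ i : Fin r, (Nat.nth Nat.Prime (i : ℕ)) ^ d i

/-- The monomial ideal `I_n` of `K[x_1, …, x_r]` generated by all monomials of
weight `> n`. -/
noncomputable def truncIdeal (K : Type*) [Field K] (n r : ℕ) : Ideal (MvPolynomial (Fin r) K) :=
  Ideal.span {m | ∃ d : Fin r →₀ ℕ, n < weight d ∧ m = MvPolynomial.monomial d (1 : K)}

section aux

variable {r : ℕ}

lemma weight_pos (d : Fin r →₀ ℕ) : 0 < weight d :=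
  Finset.prod_pos fun i _ => pow_pos (Nat.prime_nth_prime (i : ℕ)).pos _

lemma weight_add (d e : Fin r →₀ ℕ) : weight (d + e) = weight d * weight e := by
  simp [weight, pow_add, Finset.prod_mul_distrib]

lemma factorization_weight (d : Fin r →₀ ℕ) (j : Fin r) :
    (weight d).factorization (Nat.nth Nat.Prime (j : ℕ)) = d j := by
  rw [weight, Nat.factorization_prod
    (fun (i : Fin r) _ => (pow_pos (Nat.prime_nth_prime (i : ℕ)).pos _).ne')]
  rw [Finsupp.finset_sum_apply]
  rw [Finset.sum_eq_single j]
  · rw [(Nat.prime_nth_prime (j : ℕ)).factorization_pow, Finsupp.single_eq_same]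
  · intro i _ hij
    rw [(Nat.prime_nth_prime (i : ℕ)).factorization_pow, Finsupp.single_eq_of_ne']
    exact fun h => hij (Fin.ext ((Nat.nth_injective Nat.infinite_setOf_prime) h))
  · simp

lemma weight_injective : Function.Injective (weight (r := r)) := by
  intro d e h
  ext j
  rw [← factorization_weight d j, ← factorization_weight e j, h]

end aux

lemma coeff_eq_zero_of_mem_truncIdeal {K : Type*} [Field K] {n r : ℕ}
    {p : MvPolynomial (Fin r) K}
    (hp : p ∈ truncIdeal K n r) : ∀ d : Fin r →₀ ℕ, weight d ≤ n →
    MvPolynomial.coeff d p = 0 := by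
  refine Submodule.span_induction ?_ ?_ ?_ ?_ hp
  · rintro m ⟨e, he, rfl⟩ d hd
    rw [MvPolynomial.coeff_monomial, if_neg]
    rintro rfl; exact absurd hd (not_le.mpr he)
  · simp
  · intro x y _ _ hx hy d hd
    simp [hx d hd, hy d hd]
  · intro a x _ hx d hd
    rw [smul_eq_mul, MvPolynomial.coeff_mul]
    refine Finset.sum_eq_zero fun uv huv => ?_
    have h1 : uv.1 + uv.2 = d := Finset.HasAntidiagonal.mem_antidiagonal.mp huv
    have h2 : weight uv.2 ∣ weight d := by rw [← h1, weight_add]; exact dvd_mul_left _ _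
    rw [hx uv.2 (le_trans (Nat.le_of_dvd (weight_pos d) h2) hd), mul_zero]

set_option maxHeartbeats 1000000 in
set_option synthInstance.maxHeartbeats 400000 in
theorem truncation_monomial_basis_artinian_finrank
    (K : Type*) [Field K] (n : ℕ) (hn : 1 ≤ n) :
    LinearIndependent K
      (fun d : {d : Fin (Nat.primeCounting n) →₀ ℕ // weight d ≤ n} =>
        Ideal.Quotient.mk (truncIdeal K n (Nat.primeCounting n))
          (MvPolynomial.monomial (d : Fin (Nat.primeCounting n) →₀ ℕ) (1 : K))) ∧
    Submodule.span K
      (Set.range (fun d : {d : Fin (Nat.primeCounting n) →₀ ℕ // weight d ≤ n} =>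
        Ideal.Quotient.mk (truncIdeal K n (Nat.primeCounting n))
          (MvPolynomial.monomial (d : Fin (Nat.primeCounting n) →₀ ℕ) (1 : K)))) = ⊤ ∧
    IsArtinianRing (MvPolynomial (Fin (Nat.primeCounting n)) K ⧸
      truncIdeal K n (Nat.primeCounting n)) ∧
    Module.finrank K (MvPolynomial (Fin (Nat.primeCounting n)) K ⧸
      truncIdeal K n (Nat.primeCounting n)) = n := by
  set r := Nat.primeCounting n with hr
  set I := truncIdeal K n r with hI
  set f : {d : Fin r →₀ ℕ // weight d ≤ n} → MvPolynomial (Fin r) K ⧸ I :=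
    fun d => Ideal.Quotient.mk I (MvPolynomial.monomial (d : Fin r →₀ ℕ) (1 : K)) with hf
  have mk_smul : ∀ (c : K) (p : MvPolynomial (Fin r) K),
      Ideal.Quotient.mk I (c • p) = c • Ideal.Quotient.mk I p := fun c p => by
    rw [← Ideal.Quotient.mkₐ_eq_mk K I, map_smul]
  -- linear independence
  have hli : LinearIndependent K f := by
    rw [linearIndependent_iff']
    intro s g hs i hi
    have hmem : (∑ j ∈ s, g j • MvPolynomial.monomial (j : Fin r →₀ ℕ) (1 : K)) ∈ I := by
      rw [← Ideal.Quotient.eq_zero_iff_mem, ← hs, map_sum]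
      exact Finset.sum_congr rfl fun j _ => (mk_smul _ _)
    have key := coeff_eq_zero_of_mem_truncIdeal hmem (i : Fin r →₀ ℕ) i.2
    rw [MvPolynomial.coeff_sum, Finset.sum_eq_single i] at key
    · simpa using key
    · intro j _ hj
      rw [MvPolynomial.coeff_smul, MvPolynomial.coeff_monomial, if_neg, smul_zero]
      exact fun h => hj (Subtype.ext h)
    · intro h; exact absurd hi h
  -- spanning
  have hspan : Submodule.span K (Set.range f) = ⊤ := by
    rw [eq_top_iff]
    rintro x -
    obtain ⟨p, rfl⟩ := Ideal.Quotient.mk_surjective x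
    rw [MvPolynomial.as_sum p, map_sum]
    refine Submodule.sum_mem _ fun d _ => ?_
    have hmono : (MvPolynomial.monomial d) (MvPolynomial.coeff d p) =
        (MvPolynomial.coeff d p) • (MvPolynomial.monomial d (1 : K)) := by
      rw [MvPolynomial.smul_monomial, smul_eq_mul, mul_one]
    rw [hmono, mk_smul]
    by_cases h : weight d ≤ n
    · exact Submodule.smul_mem _ _ (Submodule.subset_span ⟨⟨d, h⟩, rfl⟩)
    · have hz : Ideal.Quotient.mk I (MvPolynomial.monomial d (1 : K)) = 0 := by
        rw [Ideal.Quotient.eq_zero_iff_mem]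
        exact Ideal.subset_span ⟨d, not_le.mp h, rfl⟩
      rw [hz, smul_zero]
      exact Submodule.zero_mem _
  -- cardinality
  let toF : {d : Fin r →₀ ℕ // weight d ≤ n} → (Finset.Icc 1 n) :=
    fun d => ⟨weight d.1, Finset.mem_Icc.mpr ⟨weight_pos d.1, d.2⟩⟩
  have hbij : Function.Bijective toF := by
    constructor
    · intro a b h
      exact Subtype.ext (weight_injective (congrArg Subtype.val h))
    · rintro ⟨m, hm⟩
      rw [Finset.mem_Icc] at hm
      have hm0 : m ≠ 0 := by omega
      set d : Fin r →₀ ℕ := Finsupp.equivFunOnFinite.symm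
          (fun i => m.factorization (Nat.nth Nat.Prime (i : ℕ))) with hd
      have hdapp : ∀ i : Fin r, d i = m.factorization (Nat.nth Nat.Prime (i : ℕ)) :=
        fun i => rfl
      have hsub : m.primeFactors ⊆
          Finset.univ.image (fun i : Fin r => Nat.nth Nat.Prime (i : ℕ)) := by
        intro q hq
        obtain ⟨hq1, hq2, _⟩ := Nat.mem_primeFactors.mp hq
        have hqn : q ≤ n := le_trans (Nat.le_of_dvd (Nat.pos_of_ne_zero hm0) hq2) hm.2
        have hlt : Nat.count Nat.Prime q < r := by
          rw [hr, Nat.primeCounting, Nat.primeCounting']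
          exact Nat.count_strict_mono hq1 (by omega)
        refine Finset.mem_image.mpr ⟨⟨Nat.count Nat.Prime q, hlt⟩, Finset.mem_univ _, ?_⟩
        exact Nat.nth_count hq1
      have hwd : weight d = m := by
        rw [weight]
        simp only [hdapp]
        rw [← Finset.prod_image (f := fun p => p ^ m.factorization p)
          (g := fun i : Fin r => Nat.nth Nat.Prime (i : ℕ))
          (fun i _ j _ h => Fin.ext (Nat.nth_injective Nat.infinite_setOf_prime h))]
        rw [← Finset.prod_subset hsub (fun p _ hp => by
          rw [← Nat.support_factorization, Finsupp.notMem_support_iff] at hp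
          rw [hp, pow_zero])]
        conv_rhs => rw [← Nat.factorization_prod_pow_eq_self hm0]
        rw [Finsupp.prod, Nat.support_factorization]
      exact ⟨⟨d, hwd ▸ hm.2⟩, Subtype.ext hwd⟩
  let e := Equiv.ofBijective toF hbij
  haveI : Fintype {d : Fin r →₀ ℕ // weight d ≤ n} := Fintype.ofEquiv _ e.symm
  let b : Module.Basis _ K (MvPolynomial (Fin r) K ⧸ I) := Module.Basis.mk hli (le_of_eq hspan.symm)
  haveI : Module.Finite K (MvPolynomial (Fin r) K ⧸ I) := Module.Finite.of_basis b
  have hfr : Module.finrank K (MvPolynomial (Fin r) K ⧸ I) = n := by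
    rw [Module.finrank_eq_card_basis b, Fintype.card_congr e, Fintype.card_coe,
      Nat.card_Icc]
    omega
  have hart : IsArtinianRing (MvPolynomial (Fin r) K ⧸ I) :=
    isArtinian_of_tower K inferInstance
  exact ⟨hli, hspan, hart, hfr⟩
end

section
/- For every n ∈ ℕ+ and every v with 1 ≤ v ≤ r(n), one has C_{n, 1 + r(n) − v} ≥ v. -/
/-!
For every `n ∈ ℕ+` and every `v` with `1 ≤ v ≤ r(n)` (where `r(n)` is the
number of primes `≤ n`), one has `C_{n, 1 + r(n) − v} ≥ v`.
-/

/-- `nthPrime v` is the `v`-th prime number, 1-indexed: `nthPrime 1 = 2`. -/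
noncomputable def nthPrime (v : ℕ) : ℕ := Nat.nth Nat.Prime (v - 1)

/-- `Cnv n v` is the number of integers `x` with `n / p_v < x ≤ n` all of
whose prime factors are `≥ p_v`, where `p_v = nthPrime v`.  It equals the
number of minimal monomial generators of the ideal `I_n` with minimal support
index `v`. -/
noncomputable def Cnv (n v : ℕ) : ℕ :=
  Set.ncard {x : ℕ | (n : ℚ) / (nthPrime v : ℚ) < (x : ℚ) ∧ x ≤ n ∧
    ∀ q : ℕ, q.Prime → q ∣ x → nthPrime v ≤ q}

theorem cnv_ge (n v : ℕ) (hn : 1 ≤ n) (hv : 1 ≤ v) (hvr : v ≤ Nat.primeCounting n) :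
    v ≤ Cnv n (1 + Nat.primeCounting n - v) := by
  set r := Nat.primeCounting n with hr
  have hinf := Nat.infinite_setOf_prime
  have hw : 1 + r - v - 1 = r - v := by omega
  have hP : nthPrime (1 + r - v) = Nat.nth Nat.Prime (r - v) := by
    rw [nthPrime, hw]
  set P := Nat.nth Nat.Prime (r - v) with hPdef
  have hPp : P.Prime := Nat.prime_nth_prime _
  have hP2 : 2 ≤ P := hPp.two_le
  -- primes with index j, r - v ≤ j ≤ r - 1, are ≤ n
  have hcount : r = Nat.count Nat.Prime (n + 1) := rfl
  have hle_n : ∀ j, j ≤ r - 1 → Nat.nth Nat.Prime j ≤ n := by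
    intro j hj
    have : j < Nat.count Nat.Prime (n + 1) := by omega
    have := Nat.nth_lt_of_lt_count this
    omega
  set f : ℕ → ℕ := fun j => Nat.nth Nat.Prime j * P ^ Nat.log P (n / Nat.nth Nat.Prime j)
    with hf
  set S := {x : ℕ | (n : ℚ) / (nthPrime (1 + r - v) : ℚ) < (x : ℚ) ∧ x ≤ n ∧
    ∀ q : ℕ, q.Prime → q ∣ x → nthPrime (1 + r - v) ≤ q} with hS
  have hmem : ∀ j ∈ Finset.Icc (r - v) (r - 1), f j ∈ S := by
    intro j hj
    simp only [Finset.mem_Icc] at hj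
    set q := Nat.nth Nat.Prime j with hq
    have hqp : q.Prime := Nat.prime_nth_prime _
    have hq0 : 0 < q := hqp.pos
    have hqn : q ≤ n := hle_n j hj.2
    have hPq : P ≤ q := Nat.nth_le_nth hinf |>.2 hj.1
    set k := Nat.log P (n / q) with hk
    have hd1 : 0 < n / q := Nat.div_pos hqn hq0
    have h1 : P ^ k ≤ n / q := Nat.pow_log_le_self P hd1.ne'
    have h2 : n / q < P ^ (k + 1) := Nat.lt_pow_succ_log_self hP2 _
    have hfle : f j ≤ n := by
      have := (Nat.le_div_iff_mul_le hq0).1 h1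
      simpa [hf, mul_comm] using this
    have hfgt : n < f j * P := by
      have := (Nat.div_lt_iff_lt_mul hq0).1 h2
      calc n < P ^ (k + 1) * q := this
        _ = q * P ^ k * P := by ring
    refine ⟨?_, hfle, ?_⟩
    · rw [hP]
      rw [div_lt_iff₀ (by exact_mod_cast hPp.pos)]
      exact_mod_cast hfgt
    · intro p hp hpd
      rw [hP]
      rcases (Nat.Prime.dvd_mul hp).1 hpd with h | h
      · have := (Nat.prime_dvd_prime_iff_eq hp hqp).1 h
        omega
      · have := Nat.Prime.dvd_of_dvd_pow (p := p) (n := k) hp h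
        have : p = P := (Nat.prime_dvd_prime_iff_eq hp hPp).1 this
        omega
  have key : ∀ a b, r - v ≤ a → a < b → f a ≠ f b := by
    intro a b ha1 h hab
    have ha : r - v ≤ a ∧ True := ⟨ha1, trivial⟩
    have hqa : (Nat.nth Nat.Prime a).Prime := Nat.prime_nth_prime _
    have hqb : (Nat.nth Nat.Prime b).Prime := Nat.prime_nth_prime _
    have hlt : Nat.nth Nat.Prime a < Nat.nth Nat.Prime b := (Nat.nth_lt_nth hinf).2 h
    have hPa : P ≤ Nat.nth Nat.Prime a := Nat.nth_le_nth hinf |>.2 ha.1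
    have hdvd : Nat.nth Nat.Prime b ∣ f a := by
      rw [hab]; exact Dvd.intro _ rfl
    rcases (Nat.Prime.dvd_mul hqb).1 hdvd with h' | h'
    · have := Nat.le_of_dvd hqa.pos h'
      omega
    · have := Nat.Prime.dvd_of_dvd_pow hqb h'
      have := (Nat.prime_dvd_prime_iff_eq hqb hPp).1 this
      omega
  have hinj : Set.InjOn f (Finset.Icc (r - v) (r - 1)) := by
    intro a ha b hb hab
    simp only [Finset.coe_Icc, Set.mem_Icc] at ha hb
    rcases lt_trichotomy a b with h | h | h
    · exact absurd hab (key a b ha.1 h)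
    · exact h
    · exact absurd hab.symm (key b a hb.1 h)
  have hfin : S.Finite := Set.Finite.subset (Set.finite_Iic n) (fun x hx => hx.2.1)
  have hsub : (f '' (Finset.Icc (r - v) (r - 1) : Finset ℕ)) ⊆ S := by
    rintro _ ⟨j, hj, rfl⟩
    exact hmem j (by simpa using hj)
  have hcard : (f '' (Finset.Icc (r - v) (r - 1) : Finset ℕ)).ncard = v := by
    rw [Set.ncard_image_of_injOn hinj]
    rw [Set.ncard_coe_finset, Nat.card_Icc]
    omega
  calc v = (f '' (Finset.Icc (r - v) (r - 1) : Finset ℕ)).ncard := hcard.symm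
    _ ≤ S.ncard := Set.ncard_le_ncard hsub hfin
end

section
/- For every n ∈ ℕ+, the total count C_n = ∑_{v=1}^{r(n)} C_{n,v} satisfies C_n ≥ binom(r(n)+1, 2) = r(n)(r(n)+1)/2. -/
lemma nthPrime_prime (v : ℕ) : (nthPrime v).Prime :=
  Nat.prime_nth_prime _

lemma nthPrime_mono {v j : ℕ} (h : v ≤ j) : nthPrime v ≤ nthPrime j :=
  (Nat.nth_le_nth Nat.infinite_setOf_prime).2 (by omega)

lemma nthPrime_strict {v j : ℕ} (hv : 1 ≤ v) (h : v < j) : nthPrime v < nthPrime j :=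
  (Nat.nth_lt_nth Nat.infinite_setOf_prime).2 (by omega)

lemma nthPrime_le_of_le_pc {n v : ℕ} (hv : 1 ≤ v) (h : v ≤ Nat.primeCounting n) :
    nthPrime v ≤ n := by
  have : v - 1 < Nat.count Nat.Prime (n + 1) := by
    have : Nat.primeCounting n = Nat.count Nat.Prime (n + 1) := rfl
    omega
  have := Nat.nth_lt_of_lt_count this
  unfold nthPrime
  omega

/-- The key per-`v` lower bound: `C_{n,v} ≥ r(n) + 1 - v`. -/
lemma Cnv_lower (n v : ℕ) (hn : 1 ≤ n) (hv : 1 ≤ v) (hvr : v ≤ Nat.primeCounting n) :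
    Nat.primeCounting n + 1 - v ≤ Cnv n v := by
  set r := Nat.primeCounting n with hr
  set pv := nthPrime v with hpv
  have hpvp : pv.Prime := nthPrime_prime v
  have hpv2 : 2 ≤ pv := hpvp.two_le
  -- the witness function
  set f : ℕ → ℕ := fun j => nthPrime j * pv ^ Nat.log pv (n / nthPrime j) with hf
  set S : Set ℕ := {x : ℕ | (n : ℚ) / (pv : ℚ) < (x : ℚ) ∧ x ≤ n ∧
    ∀ q : ℕ, q.Prime → q ∣ x → pv ≤ q} with hS
  have hSfin : S.Finite := by
    apply (Set.finite_Iic n).subset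
    intro x hx
    exact hx.2.1
  -- membership
  have hmem : ∀ j ∈ Finset.Icc v r, f j ∈ S := by
    intro j hj
    simp only [Finset.mem_Icc] at hj
    set pj := nthPrime j with hpj
    have hpjp : pj.Prime := nthPrime_prime j
    have hpjn : pj ≤ n := nthPrime_le_of_le_pc (by omega) hj.2
    have hpvpj : pv ≤ pj := nthPrime_mono hj.1
    have hdivpos : 1 ≤ n / pj := (Nat.one_le_div_iff hpjp.pos).2 hpjn
    set L := Nat.log pv (n / pj) with hL
    have hle : pv ^ L ≤ n / pj := Nat.pow_log_le_self pv (by omega)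
    have hxn : f j ≤ n := by
      have h1 : pj * pv ^ L ≤ pj * (n / pj) := Nat.mul_le_mul_left _ hle
      have h2 : pj * (n / pj) ≤ n := by
        rw [mul_comm]; exact Nat.div_mul_le_self n pj
      simpa [hf] using h1.trans h2
    have hlt : n < pv * f j := by
      have h1 : n / pj < pv ^ (L + 1) := Nat.lt_pow_succ_log_self (by omega) _
      have h2 : n < pv ^ (L + 1) * pj := (Nat.div_lt_iff_lt_mul hpjp.pos).1 h1
      calc n < pv ^ (L + 1) * pj := h2
        _ = pv * (pj * pv ^ L) := by ring
    refine ⟨?_, hxn, ?_⟩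
    · rw [div_lt_iff₀ (by exact_mod_cast hpvp.pos)]
      have : (n : ℚ) < (pv * f j : ℕ) := by exact_mod_cast hlt
      push_cast at this ⊢
      linarith
    · intro q hq hqd
      rcases (Nat.Prime.dvd_mul hq).1 hqd with h | h
      · have := (Nat.prime_dvd_prime_iff_eq hq hpjp).1 h
        omega
      · have : q ∣ pv := hq.dvd_of_dvd_pow h
        have := (Nat.prime_dvd_prime_iff_eq hq hpvp).1 this
        omega
  -- injectivity
  have hinj : Set.InjOn f (Finset.Icc v r) := by
    have key : ∀ a ∈ Finset.Icc v r, ∀ b ∈ Finset.Icc v r, a < b → f a ≠ f b := by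
      intro a ha b hb hab heq
      simp only [Finset.mem_Icc] at ha hb
      have hpbp : (nthPrime b).Prime := nthPrime_prime b
      have hdvd : nthPrime b ∣ f a := by
        rw [heq]; exact Dvd.intro _ rfl
      rcases (Nat.Prime.dvd_mul hpbp).1 hdvd with h | h
      · have := (Nat.prime_dvd_prime_iff_eq hpbp (nthPrime_prime a)).1 h
        have := nthPrime_strict (v := a) (by omega) hab
        omega
      · have : nthPrime b ∣ pv := hpbp.dvd_of_dvd_pow h
        have heqp := (Nat.prime_dvd_prime_iff_eq hpbp hpvp).1 this
        have : pv < nthPrime b := nthPrime_strict hv (by omega)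
        omega
    intro a ha b hb heq
    by_contra hne
    rcases Nat.lt_or_ge a b with h | h
    · exact key a ha b hb h heq
    · exact key b hb a ha (by omega) heq.symm
  -- count
  have himg : (Finset.image f (Finset.Icc v r) : Set ℕ) ⊆ S := by
    intro x hx
    simp only [Finset.coe_image, Set.mem_image, Finset.mem_coe] at hx
    obtain ⟨j, hj, rfl⟩ := hx
    exact hmem j hj
  have hcard : (Finset.image f (Finset.Icc v r)).card = r + 1 - v := by
    rw [Finset.card_image_of_injOn hinj, Nat.card_Icc]
  calc r + 1 - v = Set.ncard (Finset.image f (Finset.Icc v r) : Set ℕ) := by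
        rw [Set.ncard_coe_finset, hcard]
    _ ≤ S.ncard := Set.ncard_le_ncard himg hSfin
    _ = Cnv n v := rfl

lemma sum_aux (r : ℕ) : ∑ v ∈ Finset.Icc 1 r, (r + 1 - v) = (r + 1).choose 2 := by
  induction r with
  | zero => simp
  | succ r ih =>
    rw [Finset.sum_Icc_succ_top (by omega)]
    have h1 : ∑ v ∈ Finset.Icc 1 r, (r + 1 + 1 - v) =
        ∑ v ∈ Finset.Icc 1 r, ((r + 1 - v) + 1) := by
      apply Finset.sum_congr rfl
      intro v hv
      simp only [Finset.mem_Icc] at hv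
      omega
    rw [h1, Finset.sum_add_distrib, ih, Finset.sum_const, Nat.card_Icc, smul_eq_mul]
    have h2 : (r + 1 + 1).choose 2 = (r + 1).choose 1 + (r + 1).choose 2 :=
      Nat.choose_succ_succ _ _
    rw [Nat.choose_one_right] at h2
    omega

theorem cn_total_ge_choose (n : ℕ) (hn : 1 ≤ n) :
    Nat.choose (Nat.primeCounting n + 1) 2 ≤
      ∑ v ∈ Finset.Icc 1 (Nat.primeCounting n), Cnv n v := by
  calc Nat.choose (Nat.primeCounting n + 1) 2
      = ∑ v ∈ Finset.Icc 1 (Nat.primeCounting n), (Nat.primeCounting n + 1 - v) :=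
        (sum_aux _).symm
    _ ≤ ∑ v ∈ Finset.Icc 1 (Nat.primeCounting n), Cnv n v := by
        apply Finset.sum_le_sum
        intro v hv
        simp only [Finset.mem_Icc] at hv
        exact Cnv_lower n v hn hv.1 hv.2
end

section
/- For every fixed v ∈ ℕ+ there exists N ∈ ℕ such that for all n ≥ N one has C_{n, 1 + r(n) − v} = v. -/
private lemma prime_infinite : {p : ℕ | p.Prime}.Infinite :=
  Nat.infinite_setOf_prime

private lemma nth_prime_pos (k : ℕ) : 0 < Nat.nth Nat.Prime k :=
  (Nat.prime_nth_prime k).pos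

/-- Bertrand for consecutive primes. -/
private lemma nth_succ_lt_two_mul (k : ℕ) :
    Nat.nth Nat.Prime (k + 1) ≤ 2 * Nat.nth Nat.Prime k := by
  obtain ⟨p, hp, h1, h2⟩ :=
    Nat.exists_prime_lt_and_le_two_mul (Nat.nth Nat.Prime k) (nth_prime_pos k).ne'
  have hk : k < Nat.count Nat.Prime p :=
    (Nat.lt_nth_iff_count_lt (p := Nat.Prime) prime_infinite).mpr h1
  calc Nat.nth Nat.Prime (k + 1) ≤ Nat.nth Nat.Prime (Nat.count Nat.Prime p) :=
        (Nat.nth_le_nth prime_infinite).mpr hk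
    _ = p := Nat.nth_count hp
    _ ≤ 2 * Nat.nth Nat.Prime k := h2

private lemma nth_add_le (k j : ℕ) :
    Nat.nth Nat.Prime (k + j) ≤ 2 ^ j * Nat.nth Nat.Prime k := by
  induction j with
  | zero => simp
  | succ j ih =>
      calc Nat.nth Nat.Prime (k + j + 1) ≤ 2 * Nat.nth Nat.Prime (k + j) :=
            nth_succ_lt_two_mul _
        _ ≤ 2 * (2 ^ j * Nat.nth Nat.Prime k) := by omega
        _ = 2 ^ (j + 1) * Nat.nth Nat.Prime k := by ring

private lemma lt_two_mul_largest_prime {n : ℕ} (hn : 2 ≤ n) :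
    n < 2 * Nat.nth Nat.Prime (Nat.count Nat.Prime (n + 1) - 1) := by
  set r := Nat.count Nat.Prime (n + 1) with hr
  have hm : 1 ≤ n / 2 := by omega
  obtain ⟨p, hp, h1, h2⟩ := Nat.exists_prime_lt_and_le_two_mul (n / 2) (by omega)
  have hpn : p ≤ n := h2.trans (by omega)
  have hcount : Nat.count Nat.Prime p + 1 ≤ r := by
    have h3 : Nat.count Nat.Prime (p + 1) ≤ r :=
      Nat.count_monotone _ (by omega)
    rwa [Nat.count_succ, if_pos hp] at h3
  have hple : p ≤ Nat.nth Nat.Prime (r - 1) :=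
    (Nat.count_le_iff_le_nth (p := Nat.Prime) prime_infinite).mp (by omega)
  omega

theorem cnv_eventually_eq (v : ℕ) (hv : 1 ≤ v) :
    ∃ N : ℕ, ∀ n : ℕ, N ≤ n → Cnv n (1 + Nat.primeCounting n - v) = v := by
  refine ⟨max (4 ^ v) (Nat.nth Nat.Prime (v - 1) + 2), fun n hn => ?_⟩
  have hn4 : 4 ^ v ≤ n := le_trans (le_max_left _ _) hn
  have hn2 : 2 ≤ n := by
    have : 4 ≤ 4 ^ v := le_self_pow₀ (by norm_num) (by omega)
    omega
  set r := Nat.primeCounting n with hrdef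
  have hr : r = Nat.count Nat.Prime (n + 1) := rfl
  have hrv : v ≤ r := by
    have h1 : Nat.nth Nat.Prime (v - 1) < n + 1 := by
      have := le_trans (le_max_right _ _) hn; omega
    have := (Nat.lt_nth_iff_count_lt (p := Nat.Prime) prime_infinite).mpr h1
    omega
  set a := r - v with ha
  -- key size estimates
  have hlast_le : Nat.nth Nat.Prime (r - 1) ≤ n := by
    have : r - 1 < Nat.count Nat.Prime (n + 1) := by omega
    have := (Nat.lt_nth_iff_count_lt (p := Nat.Prime) prime_infinite).mp this
    omega
  have hbig : n < 2 ^ v * Nat.nth Nat.Prime a := by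
    have h2 := lt_two_mul_largest_prime hn2
    rw [← hr] at h2
    have h3 : Nat.nth Nat.Prime (r - 1) ≤ 2 ^ (v - 1) * Nat.nth Nat.Prime a := by
      have : r - 1 = a + (v - 1) := by omega
      rw [this]; exact nth_add_le _ _
    calc n < 2 * Nat.nth Nat.Prime (r - 1) := h2
      _ ≤ 2 * (2 ^ (v - 1) * Nat.nth Nat.Prime a) := by omega
      _ = 2 ^ (v - 1 + 1) * Nat.nth Nat.Prime a := by ring
      _ = 2 ^ v * Nat.nth Nat.Prime a := by congr 2; omega
  have hpow : 2 ^ v ≤ Nat.nth Nat.Prime a := by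
    have h4v : 4 ^ v = 2 ^ v * 2 ^ v := by rw [← mul_pow]; norm_num
    nlinarith [pow_pos (by norm_num : (0:ℕ) < 2) v]
  have hsq : n < Nat.nth Nat.Prime a ^ 2 := by
    have := Nat.mul_le_mul_right (Nat.nth Nat.Prime a) hpow
    rw [sq]; omega
  have ha_le_n : Nat.nth Nat.Prime a ≤ n := by
    have : Nat.nth Nat.Prime a ≤ Nat.nth Nat.Prime (r - 1) :=
      (Nat.nth_le_nth prime_infinite).mpr (by omega)
    omega
  have hapos : 0 < Nat.nth Nat.Prime a := nth_prime_pos a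
  have haQ : (0 : ℚ) < (Nat.nth Nat.Prime a : ℚ) := by exact_mod_cast hapos
  -- identify the index
  have hidx : nthPrime (1 + r - v) = Nat.nth Nat.Prime a := by
    unfold nthPrime; congr 1; omega
  -- the set is the set of the top v primes
  have hset : {x : ℕ | (n : ℚ) / (nthPrime (1 + r - v) : ℚ) < (x : ℚ) ∧ x ≤ n ∧
      ∀ q : ℕ, q.Prime → q ∣ x → nthPrime (1 + r - v) ≤ q} =
      ↑((Finset.Ico a r).image (Nat.nth Nat.Prime)) := by
    rw [hidx]
    ext x
    simp only [Set.mem_setOf_eq, Finset.coe_image, Set.mem_image, Finset.mem_coe,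
      Finset.mem_Ico]
    constructor
    · rintro ⟨hx1, hx2, hx3⟩
      have hx1' : (n : ℚ) < x * Nat.nth Nat.Prime a := by
        rwa [div_lt_iff₀ haQ] at hx1
      have hx1n : n < x * Nat.nth Nat.Prime a := by exact_mod_cast hx1'
      have hx2' : 2 ≤ x := by
        rcases Nat.lt_or_ge x 2 with h | h
        · interval_cases x <;> omega
        · exact h
      have hxprime : x.Prime := by
        by_contra hnp
        have h1 : Nat.minFac x ^ 2 ≤ x := Nat.minFac_sq_le_self (by omega) hnp
        have h2 : Nat.nth Nat.Prime a ≤ Nat.minFac x :=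
          hx3 _ (Nat.minFac_prime (by omega)) (Nat.minFac_dvd x)
        have h3 : Nat.nth Nat.Prime a ^ 2 ≤ Nat.minFac x ^ 2 :=
          Nat.pow_le_pow_left h2 2
        omega
      have hax : Nat.nth Nat.Prime a ≤ x := hx3 x hxprime dvd_rfl
      refine ⟨Nat.count Nat.Prime x, ⟨?_, ?_⟩, Nat.nth_count hxprime⟩
      · have := Nat.count_monotone Nat.Prime hax
        rwa [Nat.count_nth_of_infinite (p := Nat.Prime) prime_infinite] at this
      · have h5 : Nat.count Nat.Prime (x + 1) ≤ r :=
          hr ▸ Nat.count_monotone _ (by omega)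
        rw [Nat.count_succ, if_pos hxprime] at h5
        omega
    · rintro ⟨k, ⟨hka, hkr⟩, rfl⟩
      have hkp : (Nat.nth Nat.Prime k).Prime := Nat.prime_nth_prime k
      have hak : Nat.nth Nat.Prime a ≤ Nat.nth Nat.Prime k :=
        (Nat.nth_le_nth prime_infinite).mpr hka
      have hkn : Nat.nth Nat.Prime k ≤ n := by
        have : Nat.nth Nat.Prime k ≤ Nat.nth Nat.Prime (r - 1) :=
          (Nat.nth_le_nth prime_infinite).mpr (by omega)
        omega
      refine ⟨?_, hkn, fun q hq hqd => ?_⟩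
      · rw [div_lt_iff₀ haQ]
        have : n < Nat.nth Nat.Prime k * Nat.nth Nat.Prime a := by
          have := Nat.mul_le_mul_right (Nat.nth Nat.Prime a) hak
          rw [sq] at hsq; omega
        exact_mod_cast this
      · have : q = Nat.nth Nat.Prime k := (Nat.prime_dvd_prime_iff_eq hq hkp).mp hqd
        omega
  unfold Cnv
  rw [hset, Set.ncard_coe_finset,
    Finset.card_image_of_injective _ (Nat.nth_injective prime_infinite),
    Nat.card_Ico]
  omega
end

section
/- For every fixed v ∈ ℕ+ there exists N ∈ ℕ such that for all n ≥ N one has C_{n, 1 + r(n) − v, 2} = v and C_{n, 1 + r(n) − v, d} = 0 for every d ≠ 2. -/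
/-- `Cnvd n v d` is the number of integers `x` with `n / p_v < x ≤ n` all of
whose prime factors are `≥ p_v` and with `Ω(x) = d - 1` prime factors counted
with multiplicity. -/
noncomputable def Cnvd (n v d : ℕ) : ℕ :=
  Set.ncard {x : ℕ | (n : ℚ) / (nthPrime v : ℚ) < (x : ℚ) ∧ x ≤ n ∧
    (∀ q : ℕ, q.Prime → q ∣ x → nthPrime v ≤ q) ∧
    x.primeFactorsList.length = d - 1}

/-- Bertrand step for the prime counting function. -/
lemma count_step (a : ℕ) (ha : a ≠ 0) :
    Nat.count Nat.Prime (a + 1) + 1 ≤ Nat.count Nat.Prime (2 * a + 1) := by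
  obtain ⟨q, hq, haq, hq2a⟩ := Nat.exists_prime_lt_and_le_two_mul a ha
  have h1 : Nat.count Nat.Prime (a + 1) ≤ Nat.count Nat.Prime q :=
    Nat.count_monotone _ haq
  have h2 : Nat.count Nat.Prime (q + 1) = Nat.count Nat.Prime q + 1 := by
    rw [Nat.count_succ, if_pos hq]
  have h3 : Nat.count Nat.Prime (q + 1) ≤ Nat.count Nat.Prime (2 * a + 1) :=
    Nat.count_monotone _ (by omega)
  omega

lemma count_iter (v : ℕ) : ∀ a : ℕ, a ≠ 0 →
    Nat.count Nat.Prime (a + 1) + v ≤ Nat.count Nat.Prime (2 ^ v * a + 1) := by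
  induction v with
  | zero => intro a _; simp
  | succ v ih =>
      intro a ha
      have h1 := ih a ha
      have h2 := count_step (2 ^ v * a) (by positivity)
      rw [show 2 * (2 ^ v * a) = 2 ^ (v + 1) * a by ring] at h2
      omega

theorem cnvd_eventually (v : ℕ) (hv : 1 ≤ v) :
    ∃ N : ℕ, ∀ n : ℕ, N ≤ n →
      Cnvd n (1 + Nat.primeCounting n - v) 2 = v ∧
      ∀ d : ℕ, 1 ≤ d → d ≠ 2 → Cnvd n (1 + Nat.primeCounting n - v) d = 0 := by
  refine ⟨4 ^ v, fun n hn => ?_⟩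
  have hinf : {p : ℕ | Nat.Prime p}.Infinite := Nat.infinite_setOf_prime
  have hn4 : 4 ≤ n := le_trans (by calc 4 = 4 ^ 1 := by norm_num
    _ ≤ 4 ^ v := Nat.pow_le_pow_right (by norm_num) hv) hn
  set s := Nat.sqrt n with hs
  have hs2v : 2 ^ v ≤ s := by
    have : Nat.sqrt (4 ^ v) ≤ s := Nat.sqrt_le_sqrt hn
    rwa [show (4 : ℕ) ^ v = (2 ^ v) ^ 2 by rw [← pow_mul, mul_comm, pow_mul]; norm_num, Nat.sqrt_eq'] at this
  have hs0 : s ≠ 0 := by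
    have : 1 ≤ 2 ^ v := Nat.one_le_two_pow
    omega
  have hkc : Nat.primeCounting n = Nat.count Nat.Prime (n + 1) := rfl
  rw [hkc]
  set k := Nat.count Nat.Prime (n + 1) with hk
  clear_value k
  have hss : s * s ≤ n := Nat.sqrt_le n
  clear_value s
  have hstep : Nat.count Nat.Prime (s + 1) + v ≤ k := by
    have h1 := count_iter v s hs0
    have h2 : Nat.count Nat.Prime (2 ^ v * s + 1) ≤ Nat.count Nat.Prime (n + 1) :=
      Nat.count_monotone _ (by
        have : 2 ^ v * s ≤ s * s := Nat.mul_le_mul_right _ hs2v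
        omega)
    omega
  have hcs1 : 1 ≤ Nat.count Nat.Prime (s + 1) := by
    have h2s : 2 ≤ s := le_trans (le_trans (by norm_num)
      (Nat.pow_le_pow_right (by norm_num) hv : 2 ^ 1 ≤ 2 ^ v)) hs2v
    exact (Nat.lt_nth_iff_count_lt hinf).mpr
      (by rw [Nat.nth_prime_zero_eq_two]; omega)
  have hvk : v + 1 ≤ k := by
    calc v + 1 = 1 + v := by omega
      _ ≤ Nat.count Nat.Prime (s + 1) + v := Nat.add_le_add_right hcs1 v
      _ ≤ k := hstep
  set p := Nat.nth Nat.Prime (k - v) with hp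
  have hpprime : p.Prime := hp ▸ Nat.prime_nth_prime _
  have hnthP : nthPrime (1 + k - v) = p := by
    unfold nthPrime
    congr 1
    omega
  have hsp : s + 1 ≤ p := by
    have h : Nat.count Nat.Prime (s + 1) ≤ k - v := by omega
    exact hp ▸ (Nat.count_le_iff_le_nth hinf).mp h
  have hcountp : Nat.count Nat.Prime p = k - v := hp ▸ Nat.count_nth_of_infinite hinf _
  clear_value p
  have hpn : p ≤ n := by
    by_contra h
    have : Nat.count Nat.Prime (n + 1) ≤ Nat.count Nat.Prime p :=
      Nat.count_monotone _ (by omega)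
    omega
  have hnpp : n < p * p :=
    lt_of_lt_of_le (by rw [hs]; exact Nat.lt_succ_sqrt n) (Nat.mul_le_mul hsp hsp)
  have hp0 : 0 < p := hpprime.pos
  have hpQ : (0 : ℚ) < (p : ℚ) := by exact_mod_cast hp0
  constructor
  · -- d = 2 : count is v
    unfold Cnvd
    rw [hnthP]
    have hseteq : {x : ℕ | (n : ℚ) / (p : ℚ) < (x : ℚ) ∧ x ≤ n ∧
        (∀ q : ℕ, q.Prime → q ∣ x → p ≤ q) ∧
        x.primeFactorsList.length = 2 - 1} =
        ↑((Finset.Ico p (n + 1)).filter Nat.Prime) := by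
      ext x
      simp only [Set.mem_setOf_eq, Finset.coe_filter, Finset.mem_Ico, Set.mem_setOf_eq]
      constructor
      · rintro ⟨h1, h2, h3, h4⟩
        have hx0 : x ≠ 0 := by
          rintro rfl
          have : (0 : ℚ) < (n : ℚ) / (p : ℚ) := by positivity
          push_cast at h1
          linarith
        obtain ⟨q, hq⟩ := List.length_eq_one_iff.mp h4
        have hqmem : q ∈ x.primeFactorsList := by rw [hq]; exact List.mem_singleton_self q
        have hxq : x = q := by
          have := Nat.prod_primeFactorsList hx0
          rw [hq] at this
          simpa using this.symm
        have hxprime : x.Prime := hxq ▸ Nat.prime_of_mem_primeFactorsList hqmem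
        exact ⟨⟨h3 x hxprime dvd_rfl, by omega⟩, hxprime⟩
      · rintro ⟨⟨hpx, hxn⟩, hxprime⟩
        refine ⟨?_, by omega, ?_, ?_⟩
        · rw [div_lt_iff₀ hpQ]
          have : (n : ℚ) < (p : ℚ) * (p : ℚ) := by exact_mod_cast hnpp
          have h2 : (p : ℚ) * (p : ℚ) ≤ (x : ℚ) * (p : ℚ) := by
            have : (p : ℚ) ≤ (x : ℚ) := by exact_mod_cast hpx
            nlinarith
          linarith
        · intro q hq hqx
          rcases (Nat.Prime.eq_one_or_self_of_dvd hxprime q hqx) with h | h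
          · exact absurd h hq.ne_one
          · omega
        · rw [Nat.primeFactorsList_prime hxprime]
          rfl
    rw [hseteq, Set.ncard_coe_finset]
    -- card of primes in [p, n+1) is v
    have hsplit : Finset.range (n + 1) = Finset.Ico 0 p ∪ Finset.Ico p (n + 1) := by
      rw [Finset.range_eq_Ico, Finset.Ico_union_Ico_eq_Ico (Nat.zero_le p) (by omega)]
    have hcard : Nat.count Nat.Prime (n + 1) =
        Nat.count Nat.Prime p + ((Finset.Ico p (n + 1)).filter Nat.Prime).card := by
      rw [Nat.count_eq_card_filter_range, hsplit, Finset.filter_union,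
        Finset.card_union_of_disjoint
          (Finset.disjoint_filter_filter (Finset.Ico_disjoint_Ico_consecutive 0 p (n + 1))),
        ← Finset.range_eq_Ico, ← Nat.count_eq_card_filter_range]
    omega
  · -- d ≠ 2 : count is 0
    intro d hd1 hd2
    unfold Cnvd
    rw [hnthP]
    have : {x : ℕ | (n : ℚ) / (p : ℚ) < (x : ℚ) ∧ x ≤ n ∧
        (∀ q : ℕ, q.Prime → q ∣ x → p ≤ q) ∧
        x.primeFactorsList.length = d - 1} = ∅ := by
      ext x
      simp only [Set.mem_setOf_eq, Set.mem_empty_iff_false, iff_false]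
      rintro ⟨h1, h2, h3, h4⟩
      have hx0 : x ≠ 0 := by
        rintro rfl
        have : (0 : ℚ) < (n : ℚ) / (p : ℚ) := by positivity
        push_cast at h1
        linarith
      rcases Nat.lt_or_ge d 2 with hd | hd
      · -- d = 1 : Ω(x) = 0, so x = 1, but x > n/p ≥ 1
        interval_cases d
        have hnil : x.primeFactorsList = [] := List.length_eq_zero_iff.mp h4
        have hx1 : x = 1 := by
          rcases (Nat.primeFactorsList_eq_nil x).mp hnil with h | h
          · exact absurd h hx0
          · exact h
        have hge1 : (1 : ℚ) ≤ (n : ℚ) / (p : ℚ) := by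
          rw [le_div_iff₀ hpQ]
          have : (p : ℚ) ≤ (n : ℚ) := by exact_mod_cast hpn
          linarith
        rw [hx1] at h1
        push_cast at h1
        linarith
      · -- d ≥ 3 : Ω(x) ≥ 2, so x ≥ p² > n
        have hd3 : 3 ≤ d := by omega
        have hlen : 2 ≤ x.primeFactorsList.length := by omega
        rcases hl : x.primeFactorsList with _ | ⟨a, _ | ⟨b, t⟩⟩
        · rw [hl] at hlen; simp at hlen
        · rw [hl] at hlen; simp at hlen
        · have hprod := Nat.prod_primeFactorsList hx0
          rw [hl] at hprod
          have hamem : a ∈ x.primeFactorsList := by rw [hl]; simp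
          have hbmem : b ∈ x.primeFactorsList := by rw [hl]; simp
          have hpa : p ≤ a := h3 a (Nat.prime_of_mem_primeFactorsList hamem)
            (Nat.dvd_of_mem_primeFactorsList hamem)
          have hpb : p ≤ b := h3 b (Nat.prime_of_mem_primeFactorsList hbmem)
            (Nat.dvd_of_mem_primeFactorsList hbmem)
          have htpos : 0 < t.prod := by
            apply List.prod_pos
            intro c hc
            have : c ∈ x.primeFactorsList := by rw [hl]; simp [hc]
            exact (Nat.prime_of_mem_primeFactorsList this).pos
          have : p * p ≤ x := by
            calc p * p ≤ a * b := Nat.mul_le_mul hpa hpb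
              _ ≤ a * b * t.prod := Nat.le_mul_of_pos_right _ htpos
              _ = x := by rw [← hprod]; simp [List.prod_cons]; ring
          omega
    rw [this]
    exact Set.ncard_empty _
end
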